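/- arXiv:2001.04164 — 4 statements merged into one kernel-verified Lean document; each statement's English description precedes it below -/
import Mathlib

section
/- For every complex number z with Re z < 0, the integral ∫₀^∞ e^{z r} log r dr over the half-line converges and equals (γ + Log(−z))/z, where γ is the Euler–Mascheroni constant and Log is the principal branch of the complex logarithm. -/
/-!
For real `z = -a` the integral is the derivative at `s = 1` of the Mellin transform
`∫₀^∞ t^(s-1) e^{-at} dt = a^(-s) Γ(s)`, which is `-(γ + log a)/a` because `Γ'(1) = -γ`.
Both sides are holomorphic on the half-plane `Re z < 0` (the left one by differentiation under
the integral sign), so the identity theorem extends the equality from the negative reals.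
-/

open MeasureTheory Complex Set Filter Topology Asymptotics

lemma cexp_mul_isBigO_rpow_atTop {z : ℂ} (hz : z.re < 0) (b : ℝ) :
    (fun t : ℝ => cexp (z * t)) =O[atTop] (· ^ b) := by
  refine IsBigO.of_norm_left ?_
  have hnorm : (fun t : ℝ => ‖cexp (z * t)‖) = fun t => Real.exp (-(-z.re) * t) := by
    ext t
    rw [Complex.norm_exp, neg_neg, Complex.re_mul_ofReal]
  rw [hnorm]
  exact (isLittleO_exp_neg_mul_rpow_atTop (neg_pos.mpr hz) b).isBigO

lemma cexp_mul_isBigO_rpow_nhdsGT_zero (z : ℂ) :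
    (fun t : ℝ => cexp (z * t)) =O[𝓝[>] 0] (· ^ (-(0 : ℝ))) := by
  have hone : (fun t : ℝ => cexp (z * t)) =O[𝓝[>] 0] (fun _ => (1 : ℝ)) :=
    ((Continuous.tendsto (by fun_prop) 0).mono_left nhdsWithin_le_nhds).isBigO_one ℝ
  refine hone.congr_right fun t => ?_
  rw [neg_zero, Real.rpow_zero]

lemma mellin_cexp_mul_hasDerivAt {z : ℂ} (hz : z.re < 0) {s : ℂ} (hs : 0 < s.re) :
    MellinConvergent (fun t : ℝ => (Real.log t : ℂ) * cexp (z * t)) s ∧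
      HasDerivAt (mellin fun t : ℝ => cexp (z * t))
        (mellin (fun t : ℝ => (Real.log t : ℂ) * cexp (z * t)) s) s :=
  mellin_hasDerivAt_of_isBigO_rpow
    ((Continuous.continuousOn (by fun_prop)).locallyIntegrableOn measurableSet_Ioi)
    (cexp_mul_isBigO_rpow_atTop hz _)
    (lt_add_one s.re) (cexp_mul_isBigO_rpow_nhdsGT_zero z) hs

lemma integrableOn_cexp_mul_mul_log {z : ℂ} (hz : z.re < 0) :
    IntegrableOn (fun r : ℝ => cexp (z * r) * Real.log r) (Ioi 0) := by
  have h := (mellin_cexp_mul_hasDerivAt hz (s := 1) one_pos).1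
  refine h.congr_fun (fun r _ => ?_) measurableSet_Ioi
  simp only [sub_self, cpow_zero, one_smul, mul_comm]

lemma integrableOn_ofReal_mul_cexp_mul_mul_log {z : ℂ} (hz : z.re < 0) :
    IntegrableOn (fun r : ℝ => (r : ℂ) * cexp (z * r) * Real.log r) (Ioi 0) := by
  have h := (mellin_cexp_mul_hasDerivAt hz (s := 2) two_pos).1
  refine h.congr_fun (fun r _ => ?_) measurableSet_Ioi
  norm_num only [cpow_one, smul_eq_mul]
  ring

lemma mellin_cexp_neg_mul {a : ℝ} (ha : 0 < a) {s : ℂ} (hs : 0 < s.re) :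
    mellin (fun t : ℝ => cexp (-(a : ℂ) * t)) s = (1 / a) ^ s * Gamma s := by
  simp only [mellin, smul_eq_mul, neg_mul]
  exact integral_cpow_mul_exp_neg_mul_Ioi hs ha

lemma hasDerivAt_one_div_cpow_mul_Gamma {a : ℝ} (ha : 0 < a) :
    HasDerivAt (fun s : ℂ => (1 / a) ^ s * Gamma s)
      (-(Real.eulerMascheroniConstant + Real.log a) / a) 1 := by
  have ha' : (1 / a : ℂ) ≠ 0 := one_div_ne_zero (ofReal_ne_zero.mpr ha.ne')
  have hlog : Complex.log (1 / a) = -Real.log a := by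
    rw [← ofReal_one, ← ofReal_div, ← ofReal_log (by positivity), one_div, Real.log_inv,
      ofReal_neg]
  refine (((hasDerivAt_id (1 : ℂ)).const_cpow (Or.inl ha')).mul
    hasDerivAt_Gamma_one).congr_deriv ?_
  simp only [id, cpow_one, Gamma_one, hlog]
  ring

lemma integral_cexp_mul_mul_log_of_im_eq_zero {z : ℂ} (hz : z.re < 0) (hz' : z.im = 0) :
    ∫ r in Ioi (0 : ℝ), cexp (z * r) * Real.log r =
      ((Real.eulerMascheroniConstant : ℂ) + Complex.log (-z)) / z := by
  set a := -z.re with ha_def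
  have ha : 0 < a := neg_pos.mpr hz
  have hza : z = -(a : ℂ) := by
    apply Complex.ext <;> simp [ha_def, hz']
  have hmellin :
      mellin (fun t : ℝ => cexp (z * t)) =ᶠ[𝓝 1] fun s => (1 / a) ^ s * Gamma s := by
    filter_upwards [(isOpen_lt continuous_const Complex.continuous_re).mem_nhds
      (show (0 : ℝ) < (1 : ℂ).re by simp)] with s hs
    rw [hza]
    exact mellin_cexp_neg_mul ha hs
  have hderiv := ((mellin_cexp_mul_hasDerivAt hz one_pos).2.congr_of_eventuallyEq
    hmellin.symm).unique (hasDerivAt_one_div_cpow_mul_Gamma ha)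
  have hint : mellin (fun t : ℝ => (Real.log t : ℂ) * cexp (z * t)) 1 =
      ∫ r in Ioi (0 : ℝ), cexp (z * r) * Real.log r := by
    simp only [mellin, sub_self, cpow_zero, one_smul, mul_comm]
  rw [← hint, hderiv, hza, neg_neg, ← ofReal_log ha.le]
  field_simp

lemma norm_cexp_mul_ofReal_le {z w : ℂ} (h : z.re ≤ w.re) {r : ℝ} (hr : 0 ≤ r) :
    ‖cexp (z * r)‖ ≤ ‖cexp (w * r)‖ := by
  simp only [norm_exp, re_mul_ofReal]
  gcongr

lemma hasDerivAt_integral_cexp_mul_mul_log {z₀ : ℂ} (hz₀ : z₀.re < 0) :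
    HasDerivAt (fun z : ℂ => ∫ r in Ioi (0 : ℝ), cexp (z * r) * Real.log r)
      (∫ r in Ioi (0 : ℝ), (r : ℂ) * cexp (z₀ * r) * Real.log r) z₀ := by
  set w : ℂ := ((z₀.re / 2 : ℝ) : ℂ)
  have hw : w.re < 0 := by simp [w]; linarith
  have hball : ∀ z ∈ Metric.ball z₀ (-z₀.re / 2), z.re ≤ w.re := by
    intro z hz
    have := (abs_le.mp ((abs_re_le_norm (z - z₀)).trans (mem_ball_iff_norm.mp hz).le)).2
    simp only [sub_re, w, ofReal_re] at this ⊢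
    linarith
  refine (hasDerivAt_integral_of_dominated_loc_of_deriv_le
    (μ := volume.restrict (Ioi 0))
    (F' := fun z r => (r : ℂ) * cexp (z * r) * Real.log r)
    (bound := fun r : ℝ => ‖(r : ℂ) * cexp (w * r) * Real.log r‖)
    (Metric.ball_mem_nhds z₀ (ε := -z₀.re / 2) (by linarith))
    (.of_forall fun z => (by fun_prop : Measurable fun r : ℝ => cexp (z * r) * Real.log r)
      |>.aestronglyMeasurable) ?_ ?_ ?_ ?_ ?_).2
  · exact integrableOn_cexp_mul_mul_log hz₀
  · exact (integrableOn_ofReal_mul_cexp_mul_mul_log hz₀).aestronglyMeasurable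
  · filter_upwards [ae_restrict_mem measurableSet_Ioi] with r (hr : 0 < r) z hz
    simp only [norm_mul]
    gcongr
    exact norm_cexp_mul_ofReal_le (hball z hz) hr.le
  · exact (integrableOn_ofReal_mul_cexp_mul_mul_log hw).norm
  · exact .of_forall fun r z _ =>
      (((hasDerivAt_mul_const (r : ℂ)).cexp).mul_const (Real.log r : ℂ)).congr_deriv (by ring)

lemma differentiableOn_eulerMascheroni_add_log_neg_div :
    DifferentiableOn ℂ (fun z : ℂ => ((Real.eulerMascheroniConstant : ℂ) + log (-z)) / z)
      {z | z.re < 0} := by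
  intro z (hz : z.re < 0)
  have hz0 : z ≠ 0 := by rintro rfl; simp at hz
  have hslit : -z ∈ slitPlane := Or.inl (by simpa using hz)
  exact (((differentiableAt_log hslit).comp z differentiableAt_id.neg).const_add _ |>.div
    differentiableAt_id hz0).differentiableWithinAt

lemma frequently_im_eq_zero_nhdsNE_ofReal (x : ℝ) :
    ∃ᶠ w in 𝓝[≠] (x : ℂ), w.im = 0 := by
  have h : Tendsto ((↑) : ℝ → ℂ) (𝓝[≠] x) (𝓝[≠] (x : ℂ)) :=
    continuous_ofReal.continuousWithinAt.tendsto_nhdsWithin fun _ ht => ofReal_injective.ne ht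
  exact h.frequently (.of_forall fun t => ofReal_im t)

/-- For every complex `z` with `Re z < 0`, the integral `∫₀^∞ e^{z r} log r dr`
converges and equals `(γ + Log(−z))/z`. -/
theorem stmt1 (z : ℂ) (hz : z.re < 0) :
    IntegrableOn (fun r : ℝ => Complex.exp (z * r) * Real.log r) (Set.Ioi 0) volume ∧
    ∫ r in Set.Ioi (0 : ℝ), Complex.exp (z * r) * Real.log r =
      ((Real.eulerMascheroniConstant : ℂ) + Complex.log (-z)) / z := by
  refine ⟨integrableOn_cexp_mul_mul_log hz, ?_⟩
  have hU : IsOpen {w : ℂ | w.re < 0} := isOpen_lt continuous_re continuous_const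
  have hF : AnalyticOnNhd ℂ (fun w : ℂ => ∫ r in Ioi (0 : ℝ), cexp (w * r) * Real.log r)
      {w | w.re < 0} :=
    DifferentiableOn.analyticOnNhd (fun w hw =>
      (hasDerivAt_integral_cexp_mul_mul_log hw).differentiableAt.differentiableWithinAt) hU
  have hG := differentiableOn_eulerMascheroni_add_log_neg_div.analyticOnNhd hU
  have hnegOne : ((-1 : ℝ) : ℂ) ∈ {w : ℂ | w.re < 0} := by simp
  refine hF.eqOn_of_preconnected_of_frequently_eq hG (convex_halfSpace_re_lt 0).isPreconnected
    hnegOne ?_ hz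
  refine ((frequently_im_eq_zero_nhdsNE_ofReal (-1)).and_eventually
    (mem_nhdsWithin_of_mem_nhds (hU.mem_nhds hnegOne))).mono fun w ⟨him, hre⟩ => ?_
  exact integral_cexp_mul_mul_log_of_im_eq_zero hre him
end

section
/- Define S(ζ, τ) := sin(τ √ζ)/√ζ for ζ > 0, S(0, τ) := τ, and S(ζ, τ) := sinh(τ √(−ζ))/√(−ζ) for ζ < 0. Suppose ζ_k → +∞ as k → ∞, let t̄ ∈ ℝ, and let f ∈ H satisfy Σ_k ζ_k² |c_k(f)|² < ∞. Then for each t ∈ ℝ the series u(t) := Σ_k S(ζ_k, t − t̄) c_k(f) v_k converges in H, the map t ↦ u(t) is twice differentiable from ℝ to H, it satisfies u''(t) = −A u(t) for all t, where A g := Σ_k ζ_k ⟨v_k, g⟩ v_k (convergent for g = u(t)), and it satisfies the initial conditions u(t̄) = 0 and u'(t̄) = f. -/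
open Filter Topology

/-- `S(ζ, τ) = sin(τ√ζ)/√ζ` for `ζ > 0`, `S(0, τ) = τ`, and `S(ζ, τ) = sinh(τ√(−ζ))/√(−ζ)`
for `ζ < 0`. -/
noncomputable def Sfun (ζ τ : ℝ) : ℝ :=
  if 0 < ζ then Real.sin (τ * Real.sqrt ζ) / Real.sqrt ζ
  else if ζ = 0 then τ
  else Real.sinh (τ * Real.sqrt (-ζ)) / Real.sqrt (-ζ)

noncomputable def Cfun (ζ τ : ℝ) : ℝ :=
  if 0 < ζ then Real.cos (τ * Real.sqrt ζ)
  else if ζ = 0 then 1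
  else Real.cosh (τ * Real.sqrt (-ζ))

lemma Sfun_hasDerivAt (ζ τ : ℝ) : HasDerivAt (Sfun ζ) (Cfun ζ τ) τ := by
  rcases lt_trichotomy 0 ζ with hζ | hζ | hζ
  · have hs : 0 < Real.sqrt ζ := Real.sqrt_pos.2 hζ
    have h2 : HasDerivAt (fun τ : ℝ => Real.sin (τ * Real.sqrt ζ))
        (Real.cos (τ * Real.sqrt ζ) * Real.sqrt ζ) τ := by
      simpa [Function.comp_def] using (Real.hasDerivAt_sin (τ * Real.sqrt ζ)).comp τ (hasDerivAt_mul_const _)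
    have h3 := h2.div_const (Real.sqrt ζ)
    rw [mul_div_cancel_right₀ _ hs.ne'] at h3
    have e1 : Sfun ζ = fun τ => Real.sin (τ * Real.sqrt ζ) / Real.sqrt ζ :=
      funext fun τ => by simp [Sfun, hζ]
    rw [e1]
    simpa only [Cfun, if_pos hζ] using h3
  · subst hζ
    have e1 : Sfun 0 = fun τ : ℝ => τ := funext fun τ => by simp [Sfun]
    rw [e1]
    simpa only [Cfun, lt_irrefl, if_neg, if_pos rfl, if_false, if_true] using hasDerivAt_id' τ
  · have hs : 0 < Real.sqrt (-ζ) := Real.sqrt_pos.2 (by linarith)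
    have h2 : HasDerivAt (fun τ : ℝ => Real.sinh (τ * Real.sqrt (-ζ)))
        (Real.cosh (τ * Real.sqrt (-ζ)) * Real.sqrt (-ζ)) τ := by
      simpa [Function.comp_def] using (Real.hasDerivAt_sinh (τ * Real.sqrt (-ζ))).comp τ (hasDerivAt_mul_const _)
    have h3 := h2.div_const (Real.sqrt (-ζ))
    rw [mul_div_cancel_right₀ _ hs.ne'] at h3
    have e1 : Sfun ζ = fun τ => Real.sinh (τ * Real.sqrt (-ζ)) / Real.sqrt (-ζ) :=
      funext fun τ => by simp [Sfun, not_lt.2 hζ.le, hζ.ne]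
    rw [e1]
    simpa only [Cfun, if_neg (by linarith : ¬ 0 < ζ), if_neg (by linarith : ¬ ζ = 0)] using h3

lemma Cfun_hasDerivAt (ζ τ : ℝ) : HasDerivAt (Cfun ζ) (-ζ * Sfun ζ τ) τ := by
  rcases lt_trichotomy 0 ζ with hζ | hζ | hζ
  · have hs : 0 < Real.sqrt ζ := Real.sqrt_pos.2 hζ
    have h2 : HasDerivAt (fun τ : ℝ => Real.cos (τ * Real.sqrt ζ))
        (-Real.sin (τ * Real.sqrt ζ) * Real.sqrt ζ) τ := by
      simpa [Function.comp_def] using (Real.hasDerivAt_cos (τ * Real.sqrt ζ)).comp τ (hasDerivAt_mul_const _)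
    have e1 : Cfun ζ = fun τ => Real.cos (τ * Real.sqrt ζ) :=
      funext fun τ => by simp [Cfun, hζ]
    rw [e1]
    convert h2 using 1
    have hss : Real.sqrt ζ * Real.sqrt ζ = ζ := Real.mul_self_sqrt hζ.le
    rw [Sfun, if_pos hζ]
    field_simp
    linear_combination (Real.sin (τ * Real.sqrt ζ)) * hss
  · subst hζ
    have e1 : Cfun 0 = fun _ : ℝ => (1:ℝ) := funext fun τ => by simp [Cfun]
    rw [e1]
    simpa using hasDerivAt_const τ (1:ℝ)
  · have hs : 0 < Real.sqrt (-ζ) := Real.sqrt_pos.2 (by linarith)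
    have h2 : HasDerivAt (fun τ : ℝ => Real.cosh (τ * Real.sqrt (-ζ)))
        (Real.sinh (τ * Real.sqrt (-ζ)) * Real.sqrt (-ζ)) τ := by
      simpa [Function.comp_def] using (Real.hasDerivAt_cosh (τ * Real.sqrt (-ζ))).comp τ (hasDerivAt_mul_const _)
    have e1 : Cfun ζ = fun τ => Real.cosh (τ * Real.sqrt (-ζ)) :=
      funext fun τ => by simp [Cfun, not_lt.2 hζ.le, hζ.ne]
    rw [e1]
    convert h2 using 1
    have hss : Real.sqrt (-ζ) * Real.sqrt (-ζ) = -ζ := Real.mul_self_sqrt (by linarith)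
    rw [Sfun, if_neg (by linarith : ¬ 0 < ζ), if_neg (by linarith : ¬ ζ = 0)]
    field_simp
    linear_combination (-(Real.sinh (τ * Real.sqrt (-ζ)))) * hss

lemma sinh_le_mul_cosh {x : ℝ} (hx : 0 ≤ x) : Real.sinh x ≤ x * Real.cosh x := by
  have := (convex_Icc (0:ℝ) x).norm_image_sub_le_of_norm_hasDerivWithin_le
    (f := Real.sinh) (f' := Real.cosh)
    (fun y _ => (Real.hasDerivAt_sinh y).hasDerivWithinAt)
    (fun y hy => by
      rw [Real.norm_eq_abs, abs_of_nonneg (Real.cosh_pos y).le]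
      exact Real.cosh_le_cosh.2 (by rw [abs_of_nonneg hy.1, abs_of_nonneg hx]; exact hy.2))
    (Set.left_mem_Icc.2 hx) (Set.right_mem_Icc.2 hx)
  rw [Real.sinh_zero, sub_zero, sub_zero, Real.norm_eq_abs, Real.norm_eq_abs,
    abs_of_nonneg hx, abs_of_nonneg (Real.sinh_nonneg_iff.2 hx)] at this
  linarith [this]

lemma Sfun_abs_le {M : ℝ} (ζ : ℝ) {τ : ℝ} (hτ : |τ| ≤ M) :
    |Sfun ζ τ| ≤ M * Real.cosh (M * Real.sqrt (max (-ζ) 0)) := by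
  have hM : 0 ≤ M := (abs_nonneg τ).trans hτ
  rcases lt_trichotomy 0 ζ with hζ | hζ | hζ
  · have hmax : max (-ζ) 0 = 0 := max_eq_right (by linarith)
    rw [hmax, Real.sqrt_zero, mul_zero, Real.cosh_zero, mul_one]
    have hs : 0 < Real.sqrt ζ := Real.sqrt_pos.2 hζ
    rw [Sfun, if_pos hζ, abs_div, abs_of_nonneg hs.le]
    calc |Real.sin (τ * Real.sqrt ζ)| / Real.sqrt ζ
        ≤ |τ * Real.sqrt ζ| / Real.sqrt ζ := (div_le_div_iff_of_pos_right hs).2 Real.abs_sin_le_abs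
      _ = |τ| := by rw [abs_mul, abs_of_nonneg hs.le, mul_div_cancel_right₀ _ hs.ne']
      _ ≤ M := hτ
  · subst hζ
    simp only [Sfun, lt_irrefl, if_neg, if_pos rfl, neg_zero, max_self, Real.sqrt_zero,
      mul_zero, Real.cosh_zero, mul_one]
    simpa using hτ
  · have hmax : max (-ζ) 0 = -ζ := max_eq_left (by linarith)
    have hs : 0 < Real.sqrt (-ζ) := Real.sqrt_pos.2 (by linarith)
    rw [hmax, Sfun, if_neg (by linarith : ¬ 0 < ζ), if_neg (by linarith : ¬ ζ = 0),
      abs_div, abs_of_nonneg hs.le, Real.abs_sinh, abs_mul, abs_of_nonneg hs.le]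
    rw [div_le_iff₀ hs]
    calc Real.sinh (|τ| * Real.sqrt (-ζ))
        ≤ (|τ| * Real.sqrt (-ζ)) * Real.cosh (|τ| * Real.sqrt (-ζ)) :=
          sinh_le_mul_cosh (by positivity)
      _ ≤ (M * Real.sqrt (-ζ)) * Real.cosh (M * Real.sqrt (-ζ)) := by
          have h1 : |τ| * Real.sqrt (-ζ) ≤ M * Real.sqrt (-ζ) :=
            mul_le_mul_of_nonneg_right hτ hs.le
          have h2 : (0:ℝ) ≤ M * Real.sqrt (-ζ) := mul_nonneg hM hs.le
          exact mul_le_mul h1 (Real.cosh_le_cosh.2 (by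
            rw [abs_of_nonneg (by positivity), abs_of_nonneg h2]; exact h1))
            (Real.cosh_pos _).le h2
      _ = M * Real.cosh (M * Real.sqrt (-ζ)) * Real.sqrt (-ζ) := by ring

lemma Cfun_abs_le {M : ℝ} (ζ : ℝ) {τ : ℝ} (hτ : |τ| ≤ M) :
    |Cfun ζ τ| ≤ Real.cosh (M * Real.sqrt (max (-ζ) 0)) := by
  have hM : 0 ≤ M := (abs_nonneg τ).trans hτ
  rcases lt_trichotomy 0 ζ with hζ | hζ | hζ
  · have hmax : max (-ζ) 0 = 0 := max_eq_right (by linarith)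
    rw [hmax, Real.sqrt_zero, mul_zero, Real.cosh_zero, Cfun, if_pos hζ]
    exact Real.abs_cos_le_one _
  · subst hζ
    simp [Cfun]
  · have hmax : max (-ζ) 0 = -ζ := max_eq_left (by linarith)
    rw [hmax, Cfun, if_neg (by linarith : ¬ 0 < ζ), if_neg (by linarith : ¬ ζ = 0),
      abs_of_nonneg (Real.cosh_pos _).le]
    apply Real.cosh_le_cosh.2
    rw [abs_mul, abs_of_nonneg (Real.sqrt_nonneg _),
      abs_of_nonneg (mul_nonneg hM (Real.sqrt_nonneg _))]
    exact mul_le_mul_of_nonneg_right hτ (Real.sqrt_nonneg _)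

lemma Sfun_abs_le_one {ζ τ : ℝ} (hζ : 1 ≤ ζ) : |Sfun ζ τ| ≤ 1 := by
  have h0 : 0 < ζ := by linarith
  have hs : 1 ≤ Real.sqrt ζ := by
    rw [show (1:ℝ) = Real.sqrt 1 by simp]; exact Real.sqrt_le_sqrt hζ
  rw [Sfun, if_pos h0, abs_div, abs_of_nonneg (by linarith : (0:ℝ) ≤ Real.sqrt ζ)]
  rw [div_le_one (by linarith)]
  exact (Real.abs_sin_le_one _).trans hs

lemma Cfun_abs_le_one {ζ τ : ℝ} (hζ : 1 ≤ ζ) : |Cfun ζ τ| ≤ 1 := by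
  rw [Cfun, if_pos (by linarith : (0:ℝ) < ζ)]
  exact Real.abs_cos_le_one _

lemma taylor_bound {f f' f'' : ℝ → ℝ} {K : ℝ} (t τ' : ℝ)
    (hf : ∀ σ, HasDerivAt f (f' σ) σ) (hf' : ∀ σ, HasDerivAt f' (f'' σ) σ)
    (hK : ∀ σ ∈ Set.uIcc t τ', |f'' σ| ≤ K) :
    |f τ' - f t - (τ' - t) * f' t| ≤ K * |τ' - t| ^ 2 := by
  have hconv : Convex ℝ (Set.uIcc t τ') := convex_uIcc t τ'
  have hK0 : 0 ≤ K := (abs_nonneg _).trans (hK t Set.left_mem_uIcc)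
  have hinner : ∀ σ ∈ Set.uIcc t τ', |f' σ - f' t| ≤ K * |τ' - t| := by
    intro σ hσ
    have h1 := hconv.norm_image_sub_le_of_norm_hasDerivWithin_le
      (f := f') (f' := f'')
      (fun x _ => (hf' x).hasDerivWithinAt)
      (fun x hx => by rw [Real.norm_eq_abs]; exact hK x hx)
      Set.left_mem_uIcc hσ
    rw [Real.norm_eq_abs, Real.norm_eq_abs] at h1
    refine h1.trans (mul_le_mul_of_nonneg_left ?_ hK0)
    have := Real.dist_le_of_mem_uIcc hσ (Set.left_mem_uIcc (a := t) (b := τ'))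
    rw [Real.dist_eq, Real.dist_eq] at this
    simpa [abs_sub_comm] using this
  have houter := hconv.norm_image_sub_le_of_norm_hasDerivWithin_le
    (f := fun σ => f σ - σ * f' t) (f' := fun σ => f' σ - f' t)
    (fun x _ => ((hf x).sub (hasDerivAt_mul_const (f' t))).hasDerivWithinAt)
    (fun x hx => by rw [Real.norm_eq_abs]; exact hinner x hx)
    Set.left_mem_uIcc Set.right_mem_uIcc
  rw [Real.norm_eq_abs, Real.norm_eq_abs] at houter
  calc |f τ' - f t - (τ' - t) * f' t|
      = |f τ' - τ' * f' t - (f t - t * f' t)| := by ring_nf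
    _ ≤ K * |τ' - t| * |τ' - t| := houter
    _ = K * |τ' - t| ^ 2 := by ring

lemma memℓp_two_of {g : ℕ → ℂ} (h : Summable fun k => ‖g k‖ ^ 2) : Memℓp g 2 := by
  apply memℓp_gen
  have h2 : ((2 : ENNReal)).toReal = ((2 : ℕ) : ℝ) := by norm_num
  rw [h2]
  simpa [Real.rpow_natCast] using h

lemma lp_two_norm_le {g : ℕ → ℂ} (hg : Memℓp g 2) {B : ℕ → ℝ} {C : ℝ} (hC : 0 ≤ C)
    (h : ∀ k, ‖g k‖ ^ 2 ≤ B k) (hB : Summable B) (hBC : ∑' k, B k ≤ C ^ 2) :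
    ‖(⟨g, hg⟩ : lp (fun _ : ℕ => ℂ) 2)‖ ≤ C := by
  apply lp.norm_le_of_tsum_le (p := 2) (by norm_num) hC
  have h2 : ((2 : ENNReal)).toReal = ((2 : ℕ) : ℝ) := by norm_num
  rw [h2]
  simp only [Real.rpow_natCast]
  have hsum : Summable fun k => ‖g k‖ ^ (2 : ℕ) :=
    hB.of_nonneg_of_le (fun k => by positivity) h
  calc (∑' k, ‖g k‖ ^ (2:ℕ)) ≤ ∑' k, B k := Summable.tsum_le_tsum h hsum hB
    _ ≤ C ^ (2:ℕ) := hBC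

lemma hasDerivAt_of_coords
    {H : Type*} [NormedAddCommGroup H] [InnerProductSpace ℂ H] [CompleteSpace H]
    (b : HilbertBasis ℕ ℂ H)
    (p q : ℕ → ℝ → ℂ)
    (hp : ∀ s, Memℓp (fun k => p k s) 2) (hq : ∀ s, Memℓp (fun k => q k s) 2)
    (t : ℝ) (K : ℕ → ℝ) (hK0 : ∀ k, 0 ≤ K k) (hKs : Summable fun k => K k ^ 2)
    (htaylor : ∀ k s, |s - t| ≤ 1 →
      ‖p k s - p k t - ((s - t : ℝ) : ℂ) * q k t‖ ≤ K k * (s - t) ^ 2) :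
    HasDerivAt (fun s => b.repr.symm ⟨fun k => p k s, hp s⟩)
      (b.repr.symm ⟨fun k => q k t, hq t⟩) t := by
  rw [hasDerivAt_iff_isLittleO]
  set Qs := ∑' k, K k ^ 2 with hQs
  have hQ0 : 0 ≤ Qs := tsum_nonneg fun k => sq_nonneg _
  have key : ∀ s : ℝ, |s - t| ≤ 1 →
      ‖b.repr.symm ⟨fun k => p k s, hp s⟩ - b.repr.symm ⟨fun k => p k t, hp t⟩
        - (s - t) • b.repr.symm ⟨fun k => q k t, hq t⟩‖
        ≤ Real.sqrt Qs * (s - t) ^ 2 := by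
    intro s hs
    have hmem : Memℓp (fun k => p k s - p k t - ((s - t : ℝ) : ℂ) * q k t) 2 := by
      have h1 : Memℓp ((fun k => p k s) - fun k => p k t) 2 := (hp s).sub (hp t)
      have h2 : Memℓp (((s - t : ℝ) : ℂ) • fun k => q k t) 2 := (hq t).const_smul _
      have h3 := h1.sub h2
      convert h3 using 1
      rfl
    have heq : b.repr.symm ⟨fun k => p k s, hp s⟩ - b.repr.symm ⟨fun k => p k t, hp t⟩
        - (s - t) • b.repr.symm ⟨fun k => q k t, hq t⟩
        = b.repr.symm ⟨fun k => p k s - p k t - ((s - t : ℝ) : ℂ) * q k t, hmem⟩ := by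
      rw [← Complex.coe_smul, ← map_smul, ← map_sub, ← map_sub]
      congr 1
    rw [heq, LinearIsometryEquiv.norm_map]
    apply lp_two_norm_le hmem (by positivity)
      (B := fun k => (K k * (s - t) ^ 2) ^ 2)
      (fun k => by
        have := htaylor k s hs
        calc ‖p k s - p k t - ((s - t : ℝ) : ℂ) * q k t‖ ^ 2
            ≤ (K k * (s - t) ^ 2) ^ 2 := by
              apply pow_le_pow_left₀ (norm_nonneg _) this
      )
    · exact (hKs.mul_left ((s - t) ^ 2 * (s - t) ^ 2)).congr fun k => by ring
    · refine le_of_eq ?_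
      calc ∑' k, (K k * (s - t) ^ 2) ^ 2
          = ∑' k, K k ^ 2 * (((s - t) ^ 2) ^ 2) := tsum_congr fun k => by ring
        _ = Qs * ((s - t) ^ 2) ^ 2 := tsum_mul_right
        _ = (Real.sqrt Qs * (s - t) ^ 2) ^ 2 := by rw [mul_pow, Real.sq_sqrt hQ0]
  have hball : ∀ᶠ s in 𝓝 t, |s - t| ≤ 1 := by
    have h := Metric.closedBall_mem_nhds t zero_lt_one
    filter_upwards [h] with s hs
    simpa [Real.dist_eq] using hs
  have hO : (fun s => b.repr.symm ⟨fun k => p k s, hp s⟩ - b.repr.symm ⟨fun k => p k t, hp t⟩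
      - (s - t) • b.repr.symm ⟨fun k => q k t, hq t⟩) =O[𝓝 t] fun s => (s - t) ^ 2 := by
    rw [Asymptotics.isBigO_iff]
    refine ⟨Real.sqrt Qs, ?_⟩
    filter_upwards [hball] with s hs
    simpa [abs_of_nonneg (sq_nonneg (s - t)), Real.norm_eq_abs] using key s hs
  have hlit : (fun s : ℝ => (s - t) ^ 2) =o[𝓝 t] fun s => s - t := by
    have h1 : Tendsto (fun s : ℝ => s - t) (𝓝 t) (𝓝 0) := by
      have := ((continuous_id (X := ℝ)).sub (continuous_const (y := t))).tendsto t
      simpa [Pi.sub_def] using this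
    have h2 : (fun s : ℝ => s - t) =o[𝓝 t] fun _ => (1 : ℝ) :=
      (Asymptotics.isLittleO_one_iff ℝ).2 h1
    simpa [pow_two] using h2.mul_isBigO (Asymptotics.isBigO_refl (fun s : ℝ => s - t) (𝓝 t))
  exact hO.trans_isLittleO hlit

lemma Sfun_zero (ζ : ℝ) : Sfun ζ 0 = 0 := by
  rw [Sfun]; split_ifs <;> simp

lemma Cfun_zero (ζ : ℝ) : Cfun ζ 0 = 1 := by
  rw [Cfun]; split_ifs <;> simp

/-- The series `u(t) = Σ_k S(ζ_k, t − t̄) ⟪v_k, f⟫ v_k` converges, is twice differentiable in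
`t`, solves `u'' = −A u` with `A g = Σ_k ζ_k ⟪v_k, g⟫ v_k`, and satisfies `u(t̄) = 0`,
`u'(t̄) = f`. -/
theorem stmt11
    {H : Type*} [NormedAddCommGroup H] [InnerProductSpace ℂ H] [CompleteSpace H]
    (v : ℕ → H) (hv : Orthonormal ℂ v)
    (hspan : (Submodule.span ℂ (Set.range v)).topologicalClosure = ⊤)
    (ζ : ℕ → ℝ) (hζ : Tendsto ζ atTop atTop) (tbar : ℝ) (f : H)
    (hf : Summable (fun k => (ζ k) ^ 2 * ‖(inner ℂ (v k) f : ℂ)‖ ^ 2)) :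
    ∃ u u' u'' : ℝ → H,
      (∀ t : ℝ, HasSum
        (fun k => ((Sfun (ζ k) (t - tbar) : ℝ) : ℂ) • (inner ℂ (v k) f : ℂ) • v k) (u t)) ∧
      (∀ t : ℝ, HasDerivAt u (u' t) t) ∧
      (∀ t : ℝ, HasDerivAt u' (u'' t) t) ∧
      (∀ t : ℝ, HasSum
        (fun k => ((ζ k : ℝ) : ℂ) • (inner ℂ (v k) (u t) : ℂ) • v k) (-(u'' t))) ∧
      u tbar = 0 ∧ u' tbar = f := by
  classical
  set c : ℕ → ℂ := fun k => inner ℂ (v k) f with hcdef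
  let b : HilbertBasis ℕ ℂ H := HilbertBasis.mk hv (ge_of_eq hspan)
  have hcoe : ⇑b = v := HilbertBasis.coe_mk hv _
  have hreprf : ∀ k, b.repr f k = c k := fun k => by
    rw [HilbertBasis.repr_apply_apply, hcoe]
  have hc2 : Summable fun k => ‖c k‖ ^ 2 := by
    have h := (lp.memℓp (b.repr f)).summable (p := 2) (by norm_num)
    have h2 : ((2 : ENNReal)).toReal = ((2 : ℕ) : ℝ) := by norm_num
    rw [h2] at h
    simp only [Real.rpow_natCast] at h
    exact h.congr fun k => by rw [hreprf k]
  have hmaster : Summable fun k => (1 + (ζ k) ^ 2) * ‖c k‖ ^ 2 :=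
    (hc2.add hf).congr fun k => by ring
  have hev : ∀ᶠ k in atTop, 1 ≤ ζ k := hζ.eventually_ge_atTop 1
  have hsumaux : ∀ (g : ℕ → ℝ) (C : ℝ),
      (∀ᶠ k in atTop, |g k| ≤ C * ((1 + ζ k ^ 2) * ‖c k‖ ^ 2)) → Summable g :=
    fun g C h =>
    Summable.of_norm_bounded_eventually_nat (g := fun k => C * ((1 + ζ k ^ 2) * ‖c k‖ ^ 2))
      (hmaster.mul_left C) (h.mono fun k hk => by simpa [Real.norm_eq_abs] using hk)
  -- coordinate functions
  set p : ℕ → ℝ → ℂ := fun k s => ((Sfun (ζ k) (s - tbar) : ℝ) : ℂ) * c k with hpdef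
  set q : ℕ → ℝ → ℂ := fun k s => ((Cfun (ζ k) (s - tbar) : ℝ) : ℂ) * c k with hqdef
  set r : ℕ → ℝ → ℂ := fun k s => ((-(ζ k) * Sfun (ζ k) (s - tbar) : ℝ) : ℂ) * c k with hrdef
  have hpn : ∀ s k, ‖p k s‖ = |Sfun (ζ k) (s - tbar)| * ‖c k‖ := fun s k => by
    simp [hpdef, Real.norm_eq_abs]
  have hqn : ∀ s k, ‖q k s‖ = |Cfun (ζ k) (s - tbar)| * ‖c k‖ := fun s k => by
    simp [hqdef, Real.norm_eq_abs]
  have hrn : ∀ s k, ‖r k s‖ = |ζ k| * |Sfun (ζ k) (s - tbar)| * ‖c k‖ := fun s k => by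
    simp [hrdef, Real.norm_eq_abs, abs_mul]
  have hp : ∀ s, Memℓp (fun k => p k s) 2 := fun s => by
    apply memℓp_two_of
    apply hsumaux _ 1
    filter_upwards [hev] with k hk
    rw [abs_of_nonneg (by positivity), hpn s k]
    have h1 := Sfun_abs_le_one (τ := s - tbar) hk
    calc (|Sfun (ζ k) (s - tbar)| * ‖c k‖) ^ 2
        = |Sfun (ζ k) (s - tbar)| ^ 2 * ‖c k‖ ^ 2 := by ring
      _ ≤ 1 ^ 2 * ‖c k‖ ^ 2 :=
          mul_le_mul_of_nonneg_right (pow_le_pow_left₀ (abs_nonneg _) h1 2) (sq_nonneg _)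
      _ ≤ 1 * ((1 + ζ k ^ 2) * ‖c k‖ ^ 2) := by
          nlinarith [mul_nonneg (sq_nonneg (ζ k)) (sq_nonneg ‖c k‖)]
  have hq : ∀ s, Memℓp (fun k => q k s) 2 := fun s => by
    apply memℓp_two_of
    apply hsumaux _ 1
    filter_upwards [hev] with k hk
    rw [abs_of_nonneg (by positivity), hqn s k]
    have h1 := Cfun_abs_le_one (τ := s - tbar) hk
    calc (|Cfun (ζ k) (s - tbar)| * ‖c k‖) ^ 2
        = |Cfun (ζ k) (s - tbar)| ^ 2 * ‖c k‖ ^ 2 := by ring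
      _ ≤ 1 ^ 2 * ‖c k‖ ^ 2 :=
          mul_le_mul_of_nonneg_right (pow_le_pow_left₀ (abs_nonneg _) h1 2) (sq_nonneg _)
      _ ≤ 1 * ((1 + ζ k ^ 2) * ‖c k‖ ^ 2) := by
          nlinarith [mul_nonneg (sq_nonneg (ζ k)) (sq_nonneg ‖c k‖)]
  have hr : ∀ s, Memℓp (fun k => r k s) 2 := fun s => by
    apply memℓp_two_of
    apply hsumaux _ 1
    filter_upwards [hev] with k hk
    rw [abs_of_nonneg (by positivity), hrn s k]
    have h1 := Sfun_abs_le_one (τ := s - tbar) hk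
    have h3 : |ζ k| * |Sfun (ζ k) (s - tbar)| ≤ |ζ k| * 1 :=
      mul_le_mul_of_nonneg_left h1 (abs_nonneg _)
    calc (|ζ k| * |Sfun (ζ k) (s - tbar)| * ‖c k‖) ^ 2
        = (|ζ k| * |Sfun (ζ k) (s - tbar)|) ^ 2 * ‖c k‖ ^ 2 := by ring
      _ ≤ (|ζ k| * 1) ^ 2 * ‖c k‖ ^ 2 :=
          mul_le_mul_of_nonneg_right
            (pow_le_pow_left₀ (mul_nonneg (abs_nonneg _) (abs_nonneg _)) h3 2) (sq_nonneg _)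
      _ = ζ k ^ 2 * ‖c k‖ ^ 2 := by rw [mul_one, sq_abs]
      _ ≤ 1 * ((1 + ζ k ^ 2) * ‖c k‖ ^ 2) := by
          nlinarith [sq_nonneg ‖c k‖]
  have hderivS : ∀ k σ, HasDerivAt (fun σ => Sfun (ζ k) (σ - tbar)) (Cfun (ζ k) (σ - tbar)) σ :=
    fun k σ => by
    simpa [Function.comp_def] using (Sfun_hasDerivAt (ζ k) (σ - tbar)).comp σ ((hasDerivAt_id σ).sub_const tbar)
  have hderivC : ∀ k σ, HasDerivAt (fun σ => Cfun (ζ k) (σ - tbar))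
      (-(ζ k) * Sfun (ζ k) (σ - tbar)) σ := fun k σ => by
    simpa [Function.comp_def] using (Cfun_hasDerivAt (ζ k) (σ - tbar)).comp σ ((hasDerivAt_id σ).sub_const tbar)
  -- the functions
  refine ⟨fun s => b.repr.symm ⟨fun k => p k s, hp s⟩,
    fun s => b.repr.symm ⟨fun k => q k s, hq s⟩,
    fun s => b.repr.symm ⟨fun k => r k s, hr s⟩, ?_, ?_, ?_, ?_, ?_, ?_⟩
  · intro t
    have h := b.hasSum_repr (b.repr.symm ⟨fun k => p k t, hp t⟩)
    rw [b.repr.apply_symm_apply] at h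
    have heq : (fun k => ((Sfun (ζ k) (t - tbar) : ℝ) : ℂ) • (inner ℂ (v k) f : ℂ) • v k)
        = fun k => (⟨fun k => p k t, hp t⟩ : lp (fun _ : ℕ => ℂ) 2) k • b k := by
      funext k
      rw [hcoe, smul_smul]
    rw [heq]
    exact h
  · intro t
    set Ms := |t - tbar| + 1 with hMs
    have hMs0 : (0:ℝ) ≤ Ms := by rw [hMs]; positivity
    have hMs1 : (1:ℝ) ≤ Ms := by rw [hMs]; linarith [abs_nonneg (t - tbar)]
    have hrange : ∀ s : ℝ, |s - t| ≤ 1 → ∀ σ ∈ Set.uIcc t s, |σ - tbar| ≤ Ms := by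
      intro s hs σ hσ
      have h1 := Real.dist_le_of_mem_uIcc hσ (Set.left_mem_uIcc (a := t) (b := s))
      rw [Real.dist_eq, Real.dist_eq] at h1
      have h2 : |t - s| = |s - t| := abs_sub_comm t s
      have h3 := abs_sub_le σ t tbar
      rw [hMs]; linarith
    set Kb : ℕ → ℝ := fun k => |ζ k| * (Ms * Real.cosh (Ms * Real.sqrt (max (-(ζ k)) 0)))
      with hKb
    have hKb0 : ∀ k, 0 ≤ Kb k := fun k =>
      mul_nonneg (abs_nonneg _) (mul_nonneg hMs0 (Real.cosh_pos _).le)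
    have hKsum : Summable fun k => (Kb k * ‖c k‖) ^ 2 := by
      apply hsumaux _ (Ms ^ 2)
      filter_upwards [hev] with k hk
      have hmax : max (-(ζ k)) 0 = 0 := max_eq_right (by linarith)
      rw [abs_of_nonneg (sq_nonneg _), hKb]
      simp only [hmax, Real.sqrt_zero, mul_zero, Real.cosh_zero, mul_one]
      rw [abs_of_nonneg (by linarith : (0:ℝ) ≤ ζ k)]
      calc (ζ k * Ms * ‖c k‖) ^ 2 = Ms ^ 2 * (ζ k ^ 2 * ‖c k‖ ^ 2) := by ring
        _ ≤ Ms ^ 2 * ((1 + ζ k ^ 2) * ‖c k‖ ^ 2) := by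
            nlinarith [sq_nonneg ‖c k‖, sq_nonneg Ms]
    apply hasDerivAt_of_coords b p q hp hq t (fun k => Kb k * ‖c k‖)
      (fun k => mul_nonneg (hKb0 k) (norm_nonneg _)) hKsum
    intro k s hs
    have hfact : p k s - p k t - ((s - t : ℝ) : ℂ) * q k t
        = ((Sfun (ζ k) (s - tbar) - Sfun (ζ k) (t - tbar)
            - (s - t) * Cfun (ζ k) (t - tbar) : ℝ) : ℂ) * c k := by
      rw [hpdef, hqdef]; push_cast; ring
    rw [hfact, norm_mul, Complex.norm_real, Real.norm_eq_abs]
    have hbnd : ∀ σ ∈ Set.uIcc t s, |-(ζ k) * Sfun (ζ k) (σ - tbar)| ≤ Kb k := by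
      intro σ hσ
      rw [abs_mul, abs_neg, hKb]
      exact mul_le_mul_of_nonneg_left (Sfun_abs_le (ζ k) (hrange s hs σ hσ)) (abs_nonneg _)
    have htay := taylor_bound t s (hderivS k) (hderivC k) hbnd
    calc |Sfun (ζ k) (s - tbar) - Sfun (ζ k) (t - tbar)
          - (s - t) * Cfun (ζ k) (t - tbar)| * ‖c k‖
        ≤ (Kb k * |s - t| ^ 2) * ‖c k‖ := mul_le_mul_of_nonneg_right htay (norm_nonneg _)
      _ = Kb k * ‖c k‖ * (s - t) ^ 2 := by rw [sq_abs]; ring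
  · intro t
    set Ms := |t - tbar| + 1 with hMs
    have hMs0 : (0:ℝ) ≤ Ms := by rw [hMs]; positivity
    have hMs1 : (1:ℝ) ≤ Ms := by rw [hMs]; linarith [abs_nonneg (t - tbar)]
    have hrange : ∀ s : ℝ, |s - t| ≤ 1 → ∀ σ ∈ Set.uIcc t s, |σ - tbar| ≤ Ms := by
      intro s hs σ hσ
      have h1 := Real.dist_le_of_mem_uIcc hσ (Set.left_mem_uIcc (a := t) (b := s))
      rw [Real.dist_eq, Real.dist_eq] at h1
      have h2 : |t - s| = |s - t| := abs_sub_comm t s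
      have h3 := abs_sub_le σ t tbar
      rw [hMs]; linarith
    set Kb : ℕ → ℝ := fun k => |ζ k| * (Ms * Real.cosh (Ms * Real.sqrt (max (-(ζ k)) 0)))
      with hKb
    have hKb0 : ∀ k, 0 ≤ Kb k := fun k =>
      mul_nonneg (abs_nonneg _) (mul_nonneg hMs0 (Real.cosh_pos _).le)
    have hKsum : Summable fun k => (Kb k * ‖c k‖) ^ 2 := by
      apply hsumaux _ (Ms ^ 2)
      filter_upwards [hev] with k hk
      have hmax : max (-(ζ k)) 0 = 0 := max_eq_right (by linarith)
      rw [abs_of_nonneg (sq_nonneg _), hKb]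
      simp only [hmax, Real.sqrt_zero, mul_zero, Real.cosh_zero, mul_one]
      rw [abs_of_nonneg (by linarith : (0:ℝ) ≤ ζ k)]
      calc (ζ k * Ms * ‖c k‖) ^ 2 = Ms ^ 2 * (ζ k ^ 2 * ‖c k‖ ^ 2) := by ring
        _ ≤ Ms ^ 2 * ((1 + ζ k ^ 2) * ‖c k‖ ^ 2) := by
            nlinarith [sq_nonneg ‖c k‖, sq_nonneg Ms]
    apply hasDerivAt_of_coords b q r hq hr t (fun k => Kb k * ‖c k‖)
      (fun k => mul_nonneg (hKb0 k) (norm_nonneg _)) hKsum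
    intro k s hs
    have hfact : q k s - q k t - ((s - t : ℝ) : ℂ) * r k t
        = ((Cfun (ζ k) (s - tbar) - Cfun (ζ k) (t - tbar)
            - (s - t) * (-(ζ k) * Sfun (ζ k) (t - tbar)) : ℝ) : ℂ) * c k := by
      rw [hqdef, hrdef]; push_cast; ring
    rw [hfact, norm_mul, Complex.norm_real, Real.norm_eq_abs]
    have hderiv2 : ∀ σ, HasDerivAt (fun σ => -(ζ k) * Sfun (ζ k) (σ - tbar))
        (-(ζ k) * Cfun (ζ k) (σ - tbar)) σ := fun σ => (hderivS k σ).const_mul (-(ζ k))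
    have hbnd : ∀ σ ∈ Set.uIcc t s, |-(ζ k) * Cfun (ζ k) (σ - tbar)| ≤ Kb k := by
      intro σ hσ
      rw [abs_mul, abs_neg, hKb]
      refine mul_le_mul_of_nonneg_left ?_ (abs_nonneg _)
      refine (Cfun_abs_le (ζ k) (hrange s hs σ hσ)).trans ?_
      exact le_mul_of_one_le_left (Real.cosh_pos _).le hMs1
    have htay := taylor_bound t s (hderivC k) hderiv2 hbnd
    calc |Cfun (ζ k) (s - tbar) - Cfun (ζ k) (t - tbar)
          - (s - t) * (-(ζ k) * Sfun (ζ k) (t - tbar))| * ‖c k‖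
        ≤ (Kb k * |s - t| ^ 2) * ‖c k‖ := mul_le_mul_of_nonneg_right htay (norm_nonneg _)
      _ = Kb k * ‖c k‖ * (s - t) ^ 2 := by rw [sq_abs]; ring
  · intro t
    have h := b.hasSum_repr (-(b.repr.symm ⟨fun k => r k t, hr t⟩))
    have heq : (fun k => ((ζ k : ℝ) : ℂ) • (inner ℂ (v k) (b.repr.symm ⟨fun k => p k t, hp t⟩) : ℂ) • v k)
        = fun k => b.repr (-(b.repr.symm ⟨fun k => r k t, hr t⟩)) k • b k := by
      funext k
      rw [hcoe, smul_smul, map_neg, b.repr.apply_symm_apply]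
      have h1 : (inner ℂ (v k) (b.repr.symm ⟨fun k => p k t, hp t⟩) : ℂ) = p k t := by
        rw [← hcoe, ← HilbertBasis.repr_apply_apply, b.repr.apply_symm_apply]
      rw [h1]
      have h2 : (-(⟨fun k => r k t, hr t⟩ : lp (fun _ : ℕ => ℂ) 2)) k = -(r k t) := rfl
      rw [h2]
      congr 1
      rw [hpdef, hrdef]
      push_cast
      ring
    rw [heq]
    exact h
  · show b.repr.symm ⟨fun k => p k tbar, hp tbar⟩ = 0
    have h0 : (⟨fun k => p k tbar, hp tbar⟩ : lp (fun _ : ℕ => ℂ) 2) = 0 := by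
      apply Subtype.ext
      funext k
      show p k tbar = 0
      simp [hpdef, Sfun_zero]
    rw [h0, map_zero]
  · show b.repr.symm ⟨fun k => q k tbar, hq tbar⟩ = f
    have h0 : (⟨fun k => q k tbar, hq tbar⟩ : lp (fun _ : ℕ => ℂ) 2) = b.repr f := by
      apply Subtype.ext
      funext k
      show q k tbar = b.repr f k
      rw [hreprf k]
      simp [hqdef, Cfun_zero]
    rw [h0, b.repr.symm_apply_apply]
end

section
/- Suppose f ∈ H satisfies Σ_k μ_k² |c_k(f)|² < ∞. Then the map t ↦ Ω(t)f from ℝ to H is twice differentiable, and for every t ∈ ℝ it satisfies (d²/dt²)(Ω(t)f) + A(Ω(t)f) = 0, where A g := Σ_k μ_k² ⟨v_k, g⟩ v_k (the series converging in H for g = Ω(t)f under the stated hypothesis). -/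
open Filter Topology

section Aux
variable {H : Type*} [NormedAddCommGroup H] [InnerProductSpace ℂ H] [CompleteSpace H]

lemma aux_summable {w : ℕ → H} (hw : Orthonormal ℂ w) {γ : ℕ → ℂ}
    (hγ : Summable fun k => ‖γ k‖ ^ 2) : Summable fun k => γ k • w k := by
  have h := (hw.orthogonalFamily.summable_iff_norm_sq_summable γ).2 hγ
  simpa [LinearIsometry.toSpanSingleton_apply] using h

omit [CompleteSpace H] in
lemma aux_norm_sq_le {w : ℕ → H} (hw : Orthonormal ℂ w) {γ : ℕ → ℂ} {S : H}
    (hγ : Summable fun k => ‖γ k‖ ^ 2)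
    (hS : HasSum (fun k => γ k • w k) S) : ‖S‖ ^ 2 ≤ ∑' k, ‖γ k‖ ^ 2 := by
  have hcont : Tendsto (fun s : Finset ℕ => ‖∑ k ∈ s, γ k • w k‖ ^ 2) atTop (𝓝 (‖S‖ ^ 2)) :=
    ((continuous_norm.pow 2).continuousAt.tendsto.comp hS)
  refine le_of_tendsto hcont (Eventually.of_forall fun s => ?_)
  have hns : ‖∑ k ∈ s, γ k • w k‖ ^ 2 = ∑ k ∈ s, ‖γ k‖ ^ 2 := by
    simpa [LinearIsometry.toSpanSingleton_apply] using hw.orthogonalFamily.norm_sum γ s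
  rw [hns]
  exact Summable.sum_le_tsum s (fun k _ => sq_nonneg _) hγ

set_option maxHeartbeats 1000000 in
lemma aux_uniform {w : ℕ → H} (hw : Orthonormal ℂ w)
    (γ : ℕ → ℝ → ℂ) (β : ℕ → ℝ) (hβ : Summable fun k => β k ^ 2)
    (hb : ∀ k t, ‖γ k t‖ ≤ β k) (g : ℝ → H)
    (hg : ∀ t, HasSum (fun k => γ k t • w k) (g t)) :
    TendstoUniformly (fun n t => ∑ k ∈ Finset.range n, γ k t • w k) g atTop := by
  rw [Metric.tendstoUniformly_iff]
  intro ε hε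
  have htail : Tendsto (fun n => ∑' k, β (k + n) ^ 2) atTop (𝓝 0) :=
    tendsto_sum_nat_add fun k => β k ^ 2
  have hev : ∀ᶠ n in atTop, ∑' k, β (k + n) ^ 2 < ε ^ 2 := by
    have : (0:ℝ) < ε ^ 2 := by positivity
    exact htail.eventually_lt_const this
  filter_upwards [hev] with n hn t
  have hsum := (hg t).summable
  have hshift : Summable fun k => γ (k + n) t • w (k + n) :=
    (summable_nat_add_iff n).2 hsum
  have hsplit := Summable.sum_add_tsum_nat_add n hsum
  have hgt : g t = (∑ k ∈ Finset.range n, γ k t • w k) + ∑' k, γ (k + n) t • w (k + n) := by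
    rw [hsplit, (hg t).tsum_eq]
  have hw' : Orthonormal ℂ fun k => w (k + n) := hw.comp _ (add_left_injective n)
  have hγsq : Summable fun k => ‖γ (k + n) t‖ ^ 2 := by
    refine Summable.of_nonneg_of_le (fun k => sq_nonneg _) (fun k => ?_)
      ((summable_nat_add_iff n).2 hβ)
    exact pow_le_pow_left₀ (norm_nonneg _) (hb _ t) 2
  have hS := hshift.hasSum
  have hbd : ‖∑' k, γ (k + n) t • w (k + n)‖ ^ 2 ≤ ∑' k, β (k + n) ^ 2 := by
    refine le_trans (aux_norm_sq_le hw' hγsq hS) ?_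
    exact Summable.tsum_le_tsum (fun k => pow_le_pow_left₀ (norm_nonneg _) (hb _ t) 2) hγsq
      ((summable_nat_add_iff n).2 hβ)
  have hlt2 : ‖∑' k, γ (k + n) t • w (k + n)‖ ^ 2 < ε ^ 2 := lt_of_le_of_lt hbd hn
  have hlt : ‖∑' k, γ (k + n) t • w (k + n)‖ < ε :=
    lt_of_pow_lt_pow_left₀ 2 hε.le hlt2
  rw [dist_eq_norm, hgt]
  simpa using hlt

end Aux

lemma aux_deriv (m : ℝ) (q : ℂ) {H : Type*} [NormedAddCommGroup H] [NormedSpace ℂ H]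
    (x : H) (t : ℝ) :
    HasDerivAt (fun s : ℝ => (q * Complex.exp (-Complex.I * s * m)) • x)
      (((-Complex.I * m * q) * Complex.exp (-Complex.I * t * m)) • x) t := by
  have h1 : HasDerivAt (fun s : ℝ => (s : ℂ)) 1 t := (hasDerivAt_id t).ofReal_comp
  have h2 : HasDerivAt (fun s : ℝ => -Complex.I * s * m) (-Complex.I * m) t := by
    have h3 : (fun s : ℝ => -Complex.I * (s : ℂ) * m) = fun s : ℝ => (-Complex.I * m) * s := by
      funext s; ring
    rw [h3]
    simpa using h1.const_mul (-Complex.I * (m : ℂ))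
  have h4 := (h2.cexp.const_mul q).smul_const x
  convert h4 using 2
  ring

lemma aux_exp_norm (m t : ℝ) : ‖Complex.exp (-Complex.I * t * m)‖ = 1 := by
  have h : (-Complex.I * t * m) = ((-(t * m) : ℝ) : ℂ) * Complex.I := by
    push_cast; ring
  rw [h, Complex.norm_exp_ofReal_mul_I]

/-- If `Σ_k μ_k² |⟪v_k, f⟫|² < ∞`, then `t ↦ Ω(t)f`, with
`Ω(t)f = Σ_k (2μ_k)⁻¹ e^{−itμ_k} ⟪v_k, f⟫ v_k`, is twice differentiable and satisfies
`(d²/dt²)(Ω(t)f) + A(Ω(t)f) = 0` where `A g = Σ_k μ_k² ⟪v_k, g⟫ v_k`. -/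
theorem stmt12
    {H : Type*} [NormedAddCommGroup H] [InnerProductSpace ℂ H] [CompleteSpace H]
    (v : ℕ → H) (hv : Orthonormal ℂ v)
    (hspan : (Submodule.span ℂ (Set.range v)).topologicalClosure = ⊤)
    (μ : ℕ → ℝ) (hμpos : ∀ k, 0 < μ k) (hμ : Tendsto μ atTop atTop)
    (f : H)
    (hf : Summable (fun k => (μ k) ^ 2 * ‖(inner ℂ (v k) f : ℂ)‖ ^ 2))
    (Ω : ℝ → H)
    (hΩ : ∀ t : ℝ, HasSum (fun k =>
      ((2 * (μ k : ℂ))⁻¹ * Complex.exp (-Complex.I * t * μ k)) •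
        (inner ℂ (v k) f : ℂ) • v k) (Ω t)) :
    ∃ Ω' Ω'' : ℝ → H,
      (∀ t : ℝ, HasDerivAt Ω (Ω' t) t) ∧
      (∀ t : ℝ, HasDerivAt Ω' (Ω'' t) t) ∧
      (∀ t : ℝ, HasSum
        (fun k => (((μ k : ℂ)) ^ 2) • (inner ℂ (v k) (Ω t) : ℂ) • v k) (-(Ω'' t))) := by
  classical
  set c : ℕ → ℂ := fun k => (inner ℂ (v k) f : ℂ) with hcdef
  set q : ℕ → ℂ := fun k => (2 * (μ k : ℂ))⁻¹ * c k with hqdef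
  set γ₀ : ℕ → ℝ → ℂ := fun k t => q k * Complex.exp (-Complex.I * t * μ k) with hγ₀def
  set γ₁ : ℕ → ℝ → ℂ :=
    fun k t => (-Complex.I * μ k * q k) * Complex.exp (-Complex.I * t * μ k) with hγ₁def
  set γ₂ : ℕ → ℝ → ℂ :=
    fun k t => (-Complex.I * μ k * (-Complex.I * μ k * q k)) * Complex.exp (-Complex.I * t * μ k)
    with hγ₂def
  have hΩ0 : ∀ t, HasSum (fun k => γ₀ k t • v k) (Ω t) := by
    intro t
    have heq : (fun k => γ₀ k t • v k) = fun k =>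
        ((2 * (μ k : ℂ))⁻¹ * Complex.exp (-Complex.I * t * μ k)) • (c k) • v k := by
      funext k
      rw [smul_smul]
      congr 1
      simp only [hγ₀def, hqdef]
      ring
    rw [heq]
    exact hΩ t
  -- norm computations
  have hexp := aux_exp_norm
  have hn1 : ∀ k t, ‖γ₁ k t‖ = ‖c k‖ / 2 := by
    intro k t
    have h1 : (μ k : ℝ) ≠ 0 := (hμpos k).ne'
    simp only [hγ₁def, hqdef]
    rw [norm_mul, aux_exp_norm, mul_one]
    simp [norm_mul, norm_inv, Complex.norm_real, abs_of_pos (hμpos k)]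
    field_simp
  have hn2 : ∀ k t, ‖γ₂ k t‖ = μ k * ‖c k‖ / 2 := by
    intro k t
    have h1 : (μ k : ℝ) ≠ 0 := (hμpos k).ne'
    simp only [hγ₂def, hqdef]
    rw [norm_mul, aux_exp_norm, mul_one]
    simp [norm_mul, norm_inv, Complex.norm_real, abs_of_pos (hμpos k)]
    field_simp
  -- summability
  have hc2 : Summable fun k => ‖c k‖ ^ 2 := hv.inner_products_summable f
  have hβ₁ : Summable fun k => (‖c k‖ / 2) ^ 2 :=
    (hc2.div_const 4).congr fun k => by ring
  have hβ₂ : Summable fun k => (μ k * ‖c k‖ / 2) ^ 2 :=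
    (hf.div_const 4).congr fun k => by ring
  have hsum1 : ∀ t, Summable fun k => γ₁ k t • v k := by
    intro t
    refine aux_summable hv ?_
    exact hβ₁.congr fun k => by rw [hn1 k t]
  have hsum2 : ∀ t, Summable fun k => γ₂ k t • v k := by
    intro t
    refine aux_summable hv ?_
    exact hβ₂.congr fun k => by rw [hn2 k t]
  refine ⟨fun t => ∑' k, γ₁ k t • v k, fun t => ∑' k, γ₂ k t • v k, ?_, ?_, ?_⟩
  · -- first derivative
    intro t
    have hu := aux_uniform hv γ₁ (fun k => ‖c k‖ / 2) hβ₁ (fun k s => (hn1 k s).le)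
      (fun s => ∑' k, γ₁ k s • v k) (fun s => (hsum1 s).hasSum)
    refine hasDerivAt_of_tendstoUniformly hu ?_ (fun s => (hΩ0 s).tendsto_sum_nat) t
    refine Eventually.of_forall fun n s => ?_
    exact HasDerivAt.fun_sum fun k _ => aux_deriv (μ k) (q k) (v k) s
  · -- second derivative
    intro t
    have hu := aux_uniform hv γ₂ (fun k => μ k * ‖c k‖ / 2) hβ₂ (fun k s => (hn2 k s).le)
      (fun s => ∑' k, γ₂ k s • v k) (fun s => (hsum2 s).hasSum)
    refine hasDerivAt_of_tendstoUniformly hu ?_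
      (fun s => ((hsum1 s).hasSum).tendsto_sum_nat) t
    refine Eventually.of_forall fun n s => ?_
    exact HasDerivAt.fun_sum fun k _ => aux_deriv (μ k) (-Complex.I * μ k * q k) (v k) s
  · -- the wave equation
    intro t
    have hinner : ∀ k, (inner ℂ (v k) (Ω t) : ℂ) = γ₀ k t := by
      intro k
      have h := (hΩ0 t).mapL (innerSL ℂ (v k))
      have h2 : (fun j => (innerSL ℂ (v k)) (γ₀ j t • v j)) =
          fun j => if j = k then γ₀ k t else 0 := by
        funext j
        simp only [innerSL_apply_apply, inner_smul_right, orthonormal_iff_ite.mp hv k j]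
        by_cases hjk : j = k
        · subst hjk; simp
        · simp [hjk, Ne.symm hjk]
      rw [h2] at h
      simpa using h.unique (hasSum_ite_eq k (γ₀ k t))
    have hneg := (hsum2 t).hasSum.neg
    have heq : (fun k => (((μ k : ℂ)) ^ 2) • (inner ℂ (v k) (Ω t) : ℂ) • v k) =
        fun k => -(γ₂ k t • v k) := by
      funext k
      rw [hinner k, smul_smul, ← neg_smul]
      congr 1
      simp only [hγ₂def, hγ₀def]
      ring_nf
      simp [Complex.I_sq]
    rw [heq]
    exact hneg
end

section
/- Let ψ : ℝ → ℂ be a Schwartz function, let (a_k)_{k∈ℕ} be complex numbers with Σ_k |a_k| < ∞, and let (μ_k)_{k∈ℕ} be strictly positive real numbers. Define g(t) := Σ_k a_k e^{−i μ_k t}. Then for every natural number N there exists a constant C such that for all real λ ≤ 0, |∫_ℝ e^{i t λ} ψ(t) g(t) dt| ≤ C (1 + |λ|)^{−N}. -/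
open MeasureTheory FourierTransform Complex
open scoped Real SchwartzMap

/-! Expanding `g` and integrating term by term (the series is dominated by `Σ |a_k| · |ψ|`)
turns the integral into `Σ_k a_k · 𝓕ψ((μ_k - λ) / 2π)`. Since `μ_k > 0` and `λ ≤ 0`, every
frequency `(μ_k - λ) / 2π` is at least `|λ| / 2π`, so the rapid decay of the Schwartz function
`𝓕ψ` gives the bound `C (1 + |λ|)^{-N}` uniformly in `k`. -/

theorem SchwartzMap.exists_norm_le_div_one_add_norm_pow {V E : Type*} [NormedAddCommGroup V]
    [NormedSpace ℝ V] [NormedAddCommGroup E] [NormedSpace ℝ E] (f : 𝓢(V, E)) (N : ℕ) :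
    ∃ D, 0 ≤ D ∧ ∀ x, ‖f x‖ ≤ D / (1 + ‖x‖) ^ N := by
  refine ⟨2 ^ N * (Finset.Iic (N, 0)).sup (fun m => SchwartzMap.seminorm ℝ m.1 m.2) f,
    by positivity, fun x => ?_⟩
  rw [le_div_iff₀' (by positivity)]
  simpa only [norm_iteratedFDeriv_zero] using
    SchwartzMap.one_add_le_sup_seminorm_apply (𝕜 := ℝ) (m := (N, 0)) le_rfl le_rfl f x

theorem hasSum_integral_mul_tsum {α 𝕜 : Type*} [MeasurableSpace α] [RCLike 𝕜] {ρ : Measure α}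
    {f : α → 𝕜} (hf : Integrable f ρ) {g : ℕ → α → 𝕜} (hg : ∀ k, AEStronglyMeasurable (g k) ρ)
    {c : ℕ → ℝ} (hc : Summable c) (hgc : ∀ k t, ‖g k t‖ ≤ c k) :
    HasSum (fun k => ∫ t, f t * g k t ∂ρ) (∫ t, f t * ∑' k, g k t ∂ρ) := by
  have hint : ∀ k, Integrable (fun t => f t * g k t) ρ := fun k =>
    hf.mul_bdd (hg k) (ae_of_all _ (hgc k))
  have hnorm : Summable fun k => ∫ t, ‖f t * g k t‖ ∂ρ := by
    refine (hc.mul_left (∫ t, ‖f t‖ ∂ρ)).of_nonneg_of_le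
      (fun k => integral_nonneg fun t => norm_nonneg _) fun k => ?_
    rw [← integral_mul_const]
    refine integral_mono (hint k).norm (hf.norm.mul_const _) fun t => ?_
    rw [norm_mul]
    exact mul_le_mul_of_nonneg_left (hgc k t) (norm_nonneg _)
  simpa only [tsum_mul_left] using hasSum_integral_of_summable_integral_norm hint hnorm

theorem integral_exp_mul_mul_exp_eq_fourier (f : ℝ → ℂ) (l m : ℝ) :
    ∫ t : ℝ, exp (I * t * l) * f t * exp (-I * m * t) = 𝓕 f ((m - l) / (2 * π)) := by
  rw [Real.fourier_real_eq_integral_exp_smul]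
  refine integral_congr_ae (ae_of_all _ fun t => ?_)
  have hphase : ((-2 * π * t * ((m - l) / (2 * π)) : ℝ) : ℂ) * I = I * t * l + -I * m * t := by
    push_cast
    field_simp
    ring
  simp only [smul_eq_mul, hphase, exp_add]
  ring

theorem hasSum_mul_fourier_integral_exp_mul_tsum {f : ℝ → ℂ} (hf : Integrable f) {a : ℕ → ℂ}
    (ha : Summable fun k => ‖a k‖) (μ : ℕ → ℝ) (l : ℝ) :
    HasSum (fun k => a k * 𝓕 f ((μ k - l) / (2 * π)))
      (∫ t : ℝ, exp (I * t * l) * f t * ∑' k, a k * exp (-I * μ k * t)) := by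
  have hcont : Continuous fun t : ℝ => exp (I * t * l) := by fun_prop
  refine (hasSum_integral_mul_tsum (hf.bdd_mul (c := 1) hcont.aestronglyMeasurable
    (ae_of_all _ fun t => by simp [norm_exp])) (g := fun k t => a k * exp (-I * μ k * t))
    (fun k => by fun_prop) ha (fun k t => by simp [norm_exp])).congr_fun fun k => ?_
  rw [← integral_exp_mul_mul_exp_eq_fourier, ← integral_const_mul]
  congr 1 with t
  ring

theorem div_one_add_abs_div_two_pi_pow_le {m l D : ℝ} (hm : 0 ≤ m) (hl : l ≤ 0) (hD : 0 ≤ D)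
    (N : ℕ) : D / (1 + |(m - l) / (2 * π)|) ^ N ≤ (2 * π) ^ N * D / (1 + |l|) ^ N := by
  have h2π : 1 ≤ 2 * π := by linarith [Real.pi_gt_three]
  have hfreq : 1 + |l| ≤ 2 * π * (1 + |(m - l) / (2 * π)|) := by
    rw [abs_of_nonpos hl, abs_of_nonneg (div_nonneg (by linarith) (by positivity)), mul_add,
      mul_div_cancel₀ _ (by positivity)]
    linarith
  rw [div_le_div_iff₀ (by positivity) (by positivity)]
  calc D * (1 + |l|) ^ N ≤ D * (2 * π * (1 + |(m - l) / (2 * π)|)) ^ N := by gcongr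
    _ = (2 * π) ^ N * D * (1 + |(m - l) / (2 * π)|) ^ N := by rw [mul_pow]; ring

/-- Let `ψ` be a Schwartz function, `Σ_k |a_k| < ∞`, `μ_k > 0`, and
`g(t) = Σ_k a_k e^{−iμ_k t}`. Then for every `N` there is `C` such that for all `λ ≤ 0`,
`|∫ e^{itλ} ψ(t) g(t) dt| ≤ C (1 + |λ|)^{−N}`. -/
theorem stmt14 (ψ : SchwartzMap ℝ ℂ) (a : ℕ → ℂ) (ha : Summable (fun k => ‖a k‖))
    (μ : ℕ → ℝ) (hμ : ∀ k, 0 < μ k) :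
    ∀ N : ℕ, ∃ C : ℝ, ∀ l : ℝ, l ≤ 0 →
      ‖∫ t : ℝ, Complex.exp (Complex.I * t * l) * ψ t *
          (∑' k : ℕ, a k * Complex.exp (-Complex.I * μ k * t))‖ ≤
        C / (1 + |l|) ^ N := by
  intro N
  obtain ⟨D, hD0, hD⟩ := SchwartzMap.exists_norm_le_div_one_add_norm_pow (𝓕 ψ) N
  refine ⟨(∑' k, ‖a k‖) * ((2 * π) ^ N * D), fun l hl => ?_⟩
  have hterm : ∀ k,
      ‖a k * 𝓕 ψ ((μ k - l) / (2 * π))‖ ≤ ‖a k‖ * ((2 * π) ^ N * D / (1 + |l|) ^ N) := by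
    intro k
    rw [norm_mul]
    gcongr
    exact (hD _).trans (div_one_add_abs_div_two_pi_pow_le (hμ k).le hl hD0 N)
  rw [← (hasSum_mul_fourier_integral_exp_mul_tsum ψ.integrable ha μ l).tsum_eq, mul_div_assoc]
  exact tsum_of_norm_bounded (ha.hasSum.mul_right _) hterm
end
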